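/- arXiv:1811.04654 — 6 statements merged into one kernel-verified Lean document; each statement's English description precedes it below -/
import Mathlib

section
/- Let d be a positive integer and let G be a (not necessarily closed) subgroup of ℝ^d. Define V = ⋂_{r>0} closure( span_ℤ( G ∩ B(0,r) ) ), where B(0,r) is the closed ball of radius r around 0, span_ℤ denotes the set of finite ℤ-linear combinations, and the closure is taken in ℝ^d. Then V is a real vector subspace of ℝ^d. -/
/-!
A closed subgroup `H` of `ℝ^d` contains the subspace `L = {x | ℝ x ⊆ H}`, and every element
of `H` close enough to `0` already lies in `L`. Otherwise the components orthogonal to `L` of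
such elements are arbitrarily small nonzero elements of the closed subgroup `H ∩ Lᗮ`; their
directions accumulate at a unit vector `u`, and the multiples `⌊t / ‖v‖⌋ • v` converge to
`t • u`, so the line `ℝ u` lies in `H ∩ Lᗮ`, hence in `L ∩ Lᗮ = 0`.

Apply this to `H = closure (span_ℤ (G ∩ B(0,r)))`: for `δ` small all generators of
`span_ℤ (G ∩ B(0,δ))` lie in the closed subspace `L`, so `V ⊆ L`, i.e. `ℝ V ⊆ H`.
-/

open Metric Set
open scoped RealInnerProductSpace

noncomputable section

/-- Euclidean space `ℝ^d`. -/
abbrev Euc (d : ℕ) := EuclideanSpace ℝ (Fin d)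

variable {d : ℕ}

/-- The transl `D - x = {y - x : y ∈ D}` of a subset of `ℝ^d`. -/
def transl (D : Set (Euc d)) (x : Euc d) : Set (Euc d) := (fun y => y - x) '' D

/-- The metric `ρ_𝕋` on `𝕋` pulled back along `θ ↦ e^{2πiθ}`:
`ρ_𝕋(e^{2πiθ}, e^{2πiθ'}) = min_{n ∈ ℤ} |θ - θ' + n|`. -/
def rhoT (θ θ' : ℝ) : ℝ := sInf { r : ℝ | ∃ n : ℤ, r = |θ - θ' + (n : ℝ)| }

/-- The character `χ_a(x) = exp(2πi⟨x,a⟩)` is weakly `D`-equivariant: for every `ε > 0`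
there is `R > 0` such that `(D-x) ∩ B(0,R) = (D-y) ∩ B(0,R)` implies
`ρ_𝕋(χ_a x, χ_a y) < ε`. -/
def WeaklyEquivariant (D : Set (Euc d)) (a : Euc d) : Prop :=
  ∀ ε > 0, ∃ R > 0, ∀ x y : Euc d,
    transl D x ∩ closedBall 0 R = transl D y ∩ closedBall 0 R →
    rhoT (⟪x, a⟫) (⟪y, a⟫) < ε

/-- The stripe `S(a,b,L1,L2) = {x : ⟨x-b,a⟩ ∈ L1·ℤ + [-L2,L2]}`. -/
def stripeSet (a b : Euc d) (L1 L2 : ℝ) : Set (Euc d) :=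
  { x | ∃ n : ℤ, ∃ t ∈ Icc (-L2) L2, (⟪x - b, a⟫) = L1 * n + t }

/-- `D` has `(L1,L2)`-stripe structure with direction `a` and radius `R`. -/
def StripeStructureWith (D : Set (Euc d)) (a : Euc d) (L1 L2 R : ℝ) : Prop :=
  ∀ x : Euc d,
    { y : Euc d | transl D x ∩ closedBall 0 R = transl D y ∩ closedBall 0 R }
      ⊆ stripeSet a x L1 L2

/-- `D` has `(L1,L2)`-stripe structure. -/
def HasStripeStructure (D : Set (Euc d)) (L1 L2 : ℝ) : Prop :=
  ∃ a : Euc d, ‖a‖ = 1 ∧ ∃ R > 0, StripeStructureWith D a L1 L2 R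

/-- `D` is `r`-uniformly discrete. -/
def UnifDiscrete (D : Set (Euc d)) (r : ℝ) : Prop :=
  ∀ x ∈ D, ∀ y ∈ D, x ≠ y → r < dist x y

/-- `D` is `R`-relatively dense. -/
def RelDense (D : Set (Euc d)) (R : ℝ) : Prop :=
  ∀ x : Euc d, ∃ y ∈ D, dist x y < R

/-- `D` is an `(R,r)`-Delone set. -/
def IsDeloneWith (D : Set (Euc d)) (R r : ℝ) : Prop :=
  0 < R ∧ 0 < r ∧ RelDense D R ∧ UnifDiscrete D r

/-- `D` is a Delone set. -/
def IsDelone (D : Set (Euc d)) : Prop := ∃ R r : ℝ, IsDeloneWith D R r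

/-- `D` has finite local complexity: for every compact `K`, the family
`{(D-x) ∩ K : x ∈ ℝ^d}` is finite modulo translation. -/
def FLC (D : Set (Euc d)) : Prop :=
  ∀ K : Set (Euc d), IsCompact K →
    ∃ F : Set (Set (Euc d)), F.Finite ∧
      ∀ x : Euc d, ∃ P ∈ F, ∃ t : Euc d, transl D x ∩ K = transl P t

/-- `D` is repetitive. -/
def Repetitive (D : Set (Euc d)) : Prop :=
  ∀ K : Set (Euc d), IsCompact K →
    ∃ R > 0, RelDense { x : Euc d | transl D x ∩ K = D ∩ K } R

/-- `D2` is locally derivable from `D1` (`D1 ⟶ D2`). -/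
def LocDerivable (D1 D2 : Set (Euc d)) : Prop :=
  ∃ R0 ≥ (0 : ℝ), ∀ x y : Euc d, ∀ L ≥ (0 : ℝ),
    transl D1 x ∩ closedBall 0 (L + R0) = transl D1 y ∩ closedBall 0 (L + R0) →
    transl D2 x ∩ closedBall 0 L = transl D2 y ∩ closedBall 0 L

open Filter Topology

theorem tendsto_floor_div_mul {ι : Type*} {l : Filter ι} {c : ι → ℝ}
    (hc : Tendsto c l (𝓝[>] 0)) (t : ℝ) :
    Tendsto (fun i => (⌊t / c i⌋ : ℝ) * c i) l (𝓝 t) := by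
  have hpos : ∀ᶠ i in l, 0 < c i := hc.eventually self_mem_nhdsWithin
  refine tendsto_of_tendsto_of_tendsto_of_le_of_le' (g := fun i => t - c i) (h := fun _ => t)
    (by simpa using (tendsto_nhds_of_tendsto_nhdsWithin hc).const_sub t) tendsto_const_nhds ?_ ?_
  · filter_upwards [hpos] with i hi
    have h := mul_lt_mul_of_pos_right (Int.sub_one_lt_floor (t / c i)) hi
    rw [sub_mul, div_mul_cancel₀ _ hi.ne'] at h
    linarith
  · filter_upwards [hpos] with i hi
    exact (le_div_iff₀ hi).mp (Int.floor_le _)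

namespace AddSubgroup

section NormedSpace

variable {E : Type*} [NormedAddCommGroup E] [NormedSpace ℝ E]

theorem smul_mem_of_tendsto_normalize {H : AddSubgroup E}
    (hH : IsClosed (H : Set E)) {v : ℕ → E} (hvH : ∀ n, v n ∈ H) (hv0 : ∀ n, v n ≠ 0)
    (hv : Tendsto (fun n => ‖v n‖) atTop (𝓝 0)) {w : E}
    (hw : Tendsto (fun n => ‖v n‖⁻¹ • v n) atTop (𝓝 w)) (t : ℝ) : t • w ∈ H := by
  have hnorm : Tendsto (fun n => ‖v n‖) atTop (𝓝[>] 0) :=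
    tendsto_nhdsWithin_iff.mpr ⟨hv, .of_forall fun n => norm_pos_iff.mpr (hv0 n)⟩
  have hlim := (tendsto_floor_div_mul hnorm t).smul hw
  refine hH.mem_of_tendsto hlim (.of_forall fun n => ?_)
  rw [smul_smul, mul_assoc, mul_inv_cancel₀ (norm_ne_zero_iff.mpr (hv0 n)), mul_one,
    Int.cast_smul_eq_zsmul]
  exact H.zsmul_mem (hvH n) _

theorem exists_ne_zero_forall_smul_mem [ProperSpace E] {H : AddSubgroup E}
    (hH : IsClosed (H : Set E)) (hsmall : ∀ ε > 0, ∃ v ∈ H, v ≠ 0 ∧ ‖v‖ < ε) :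
    ∃ u ≠ 0, ∀ t : ℝ, t • u ∈ H := by
  choose v hvH hv0 hvlt using fun n : ℕ => hsmall (1 / (n + 1)) (by positivity)
  have hsphere (n : ℕ) : ‖v n‖⁻¹ • v n ∈ sphere (0 : E) 1 := by
    simp [norm_smul, inv_mul_cancel₀ (norm_ne_zero_iff.mpr (hv0 n))]
  obtain ⟨w, hw, φ, hφ, hconv⟩ := (isCompact_sphere (0 : E) 1).tendsto_subseq hsphere
  have hsmallφ : Tendsto (fun n => ‖v (φ n)‖) atTop (𝓝 0) :=
    squeeze_zero (fun _ => norm_nonneg _) (fun n => (hvlt (φ n)).le)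
      (tendsto_one_div_add_atTop_nhds_zero_nat.comp hφ.tendsto_atTop)
  exact ⟨w, ne_zero_of_mem_sphere one_ne_zero ⟨w, hw⟩,
    smul_mem_of_tendsto_normalize hH (fun _ => hvH _) (fun _ => hv0 _) hsmallφ hconv⟩

end NormedSpace

section Lineal

variable {E : Type*} [AddCommGroup E] [Module ℝ E]

def lineal (H : AddSubgroup E) : Submodule ℝ E where
  carrier := {x | ∀ t : ℝ, t • x ∈ H}
  zero_mem' _ := by simp
  add_mem' hx hy t := by simpa only [smul_add] using H.add_mem (hx t) (hy t)
  smul_mem' c _ hx t := by simpa only [smul_smul] using hx (t * c)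

theorem mem_lineal {H : AddSubgroup E} {x : E} : x ∈ H.lineal ↔ ∀ t : ℝ, t • x ∈ H := Iff.rfl

theorem lineal_subset (H : AddSubgroup E) : (H.lineal : Set E) ⊆ H :=
  fun x hx => by simpa using hx 1

end Lineal

variable {E : Type*} [NormedAddCommGroup E] [InnerProductSpace ℝ E] [FiniteDimensional ℝ E]

theorem exists_pos_inter_ball_subset_lineal {H : AddSubgroup E} (hH : IsClosed (H : Set E)) :
    ∃ ε > 0, (H : Set E) ∩ ball 0 ε ⊆ H.lineal := by
  by_contra! hbig
  set W := H.lineal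
  have hsmall : ∀ ε > 0, ∃ v ∈ H ⊓ Wᗮ.toAddSubgroup, v ≠ 0 ∧ ‖v‖ < ε := by
    intro ε hε
    obtain ⟨g, ⟨hgH, hgε⟩, hgW⟩ := not_subset.mp (hbig ε hε)
    refine ⟨Wᗮ.starProjection g, ⟨?_, Wᗮ.starProjection_apply_mem g⟩, ?_, ?_⟩
    · rw [Submodule.starProjection_orthogonal']
      exact H.sub_mem hgH (H.lineal_subset (W.starProjection_apply_mem g))
    · rwa [Ne, Submodule.starProjection_apply_eq_zero_iff, Submodule.orthogonal_orthogonal]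
    · exact (Wᗮ.norm_starProjection_apply_le g).trans_lt (mem_ball_zero_iff.mp hgε)
  obtain ⟨u, hu0, hu⟩ := exists_ne_zero_forall_smul_mem
    (hH.inter (Submodule.isClosed_orthogonal W)) hsmall
  have huW : u ∈ W := mem_lineal.mpr fun t => (hu t).1
  have huW' : u ∈ Wᗮ := by simpa using (hu 1).2
  exact hu0 ((Submodule.mem_bot ℝ).mp ((Submodule.orthogonal_disjoint W).le_bot ⟨huW, huW'⟩))

end AddSubgroup

theorem smul_mem_closure_closure_inter_closedBall
    {E : Type*} [NormedAddCommGroup E] [InnerProductSpace ℝ E] [FiniteDimensional ℝ E]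
    (G : AddSubgroup E) {x : E}
    (hx : ∀ δ > 0, x ∈ closure (AddSubgroup.closure ((G : Set E) ∩ closedBall 0 δ) : Set E))
    {r : ℝ} (hr : 0 < r) (t : ℝ) :
    t • x ∈ closure (AddSubgroup.closure ((G : Set E) ∩ closedBall 0 r) : Set E) := by
  rw [← AddSubgroup.topologicalClosure_coe]
  set H := (AddSubgroup.closure ((G : Set E) ∩ closedBall 0 r)).topologicalClosure
  obtain ⟨ε, hε, hHε⟩ := H.exists_pos_inter_ball_subset_lineal
    (AddSubgroup.isClosed_topologicalClosure _)
  have hδ : 0 < min r (ε / 2) := lt_min hr (half_pos hε)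
  have hgen : (G : Set E) ∩ closedBall 0 (min r (ε / 2)) ⊆ H.lineal := fun g hg =>
    hHε ⟨AddSubgroup.le_topologicalClosure _ (AddSubgroup.subset_closure
        ⟨hg.1, closedBall_subset_closedBall (min_le_left _ _) hg.2⟩),
      closedBall_subset_ball ((min_le_right _ _).trans_lt (half_lt_self hε)) hg.2⟩
  have hxH : x ∈ H.lineal := closure_minimal
    ((AddSubgroup.closure_le H.lineal.toAddSubgroup).mpr hgen)
    H.lineal.closed_of_finiteDimensional (hx _ hδ)
  exact AddSubgroup.mem_lineal.mp hxH t

theorem stmt0_general (d : ℕ) (G : AddSubgroup (Euc d)) :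
    ∃ W : Submodule ℝ (Euc d),
      (W : Set (Euc d)) =
        ⋂ r ∈ Set.Ioi (0 : ℝ),
          closure ((AddSubgroup.closure ((G : Set (Euc d)) ∩ closedBall 0 r) :
            AddSubgroup (Euc d)) : Set (Euc d)) := by
  let V : AddSubgroup (Euc d) := ⨅ r : Ioi (0 : ℝ),
    (AddSubgroup.closure ((G : Set (Euc d)) ∩ closedBall 0 r)).topologicalClosure
  have hV : (V : Set (Euc d)) = ⋂ r ∈ Set.Ioi (0 : ℝ),
      closure (AddSubgroup.closure ((G : Set (Euc d)) ∩ closedBall 0 r) : Set (Euc d)) := by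
    simp [V, AddSubgroup.coe_iInf, iInter_subtype]
  refine ⟨{ V.toAddSubmonoid with smul_mem' := fun t x hx => ?_ }, hV⟩
  change x ∈ (V : Set (Euc d)) at hx
  change t • x ∈ (V : Set (Euc d))
  rw [hV, mem_iInter₂] at hx ⊢
  exact fun r hr => smul_mem_closure_closure_inter_closedBall G hx hr t

/-- `V = ⋂_{r>0} closure(span_ℤ(G ∩ B(0,r)))` is a real vector subspace of `ℝ^d`. -/
theorem stmt0 (d : ℕ) (hd : 0 < d) (G : AddSubgroup (Euc d)) :
    ∃ W : Submodule ℝ (Euc d),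
      (W : Set (Euc d)) =
        ⋂ r ∈ Set.Ioi (0 : ℝ),
          closure ((AddSubgroup.closure ((G : Set (Euc d)) ∩ closedBall 0 r) :
            AddSubgroup (Euc d)) : Set (Euc d)) :=
  stmt0_general d G
end
end

section
/- Let d be a positive integer, let G be a subgroup of ℝ^d, and define V = ⋂_{r>0} closure( span_ℤ( G ∩ B(0,r) ) ). If 0 is a limit point of G (i.e. 0 lies in the closure of G \ {0}), then V ≠ {0}, i.e. V contains a nonzero vector; in particular the dimension of V is more than 0. -/
/-!
Pick nonzero `g ∈ G` of norm at most `min r 1`; some multiple `m • g` then has norm in `[1, 2]`.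
So for every `r > 0`, the closed set `closure (span_ℤ (G ∩ B(0,r)))` meets the compact annulus
`1 ≤ ‖x‖ ≤ 2`. These sets decrease as `r ↓ 0`, so by compactness their traces on the annulus have a
common point, which is the required nonzero vector of `V`.
-/

open Metric Set
open scoped RealInnerProductSpace

noncomputable section

variable {d : ℕ}

variable {E : Type*} [NormedAddCommGroup E] [NormedSpace ℝ E]

lemma exists_norm_nsmul_mem_Ico {g : E} (hg : g ≠ 0) {a : ℝ} (ha : 0 ≤ a) :
    ∃ m : ℕ, ‖m • g‖ ∈ Ico a (a + ‖g‖) := by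
  have hg : 0 < ‖g‖ := norm_pos_iff.mpr hg
  refine ⟨⌈a / ‖g‖⌉₊, ?_, ?_⟩ <;> rw [← Nat.cast_smul_eq_nsmul ℝ, norm_smul, Real.norm_natCast]
  · exact (div_le_iff₀ hg).mp (Nat.le_ceil _)
  · calc (⌈a / ‖g‖⌉₊ : ℝ) * ‖g‖ < (a / ‖g‖ + 1) * ‖g‖ :=
          mul_lt_mul_of_pos_right (Nat.ceil_lt_add_one (by positivity)) hg
      _ = a + ‖g‖ := by field_simp

lemma exists_mem_addSubgroupClosure_inter_closedBall_norm_mem_Icc {S : Set E}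
    (h0 : (0 : E) ∈ closure (S \ {0})) {r a : ℝ} (hr : 0 < r) (ha : 0 < a) :
    ∃ x ∈ AddSubgroup.closure (S ∩ closedBall 0 r), ‖x‖ ∈ Icc a (2 * a) := by
  obtain ⟨g, ⟨hgS, hg0⟩, hg⟩ := Metric.mem_closure_iff.mp h0 _ (lt_min hr ha)
  rw [dist_zero_left] at hg
  obtain ⟨m, hma, hmg⟩ := exists_norm_nsmul_mem_Ico hg0 ha.le
  have hgr : g ∈ S ∩ closedBall 0 r :=
    ⟨hgS, mem_closedBall_zero_iff.mpr (hg.trans_le (min_le_left _ _)).le⟩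
  refine ⟨m • g, AddSubgroup.nsmul_mem _ (AddSubgroup.subset_closure hgr) m, hma, ?_⟩
  linarith [min_le_right r a]

theorem exists_ne_zero_mem_iInter_closure_addSubgroupClosure_inter_closedBall [ProperSpace E]
    {S : Set E} (h0 : (0 : E) ∈ closure (S \ {0})) :
    ∃ v : E, v ≠ 0 ∧ v ∈ ⋂ r ∈ Ioi (0 : ℝ),
      closure (AddSubgroup.closure (S ∩ closedBall 0 r) : Set E) := by
  let annulus : Set E := closedBall 0 2 \ ball 0 1
  have h_annulus : IsCompact annulus := (isCompact_closedBall 0 2).diff isOpen_ball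
  let t : Ioi (0 : ℝ) → Set E := fun r =>
    closure (AddSubgroup.closure (S ∩ closedBall 0 r) : Set E) ∩ annulus
  have ht_mono : Monotone t := fun r s hrs =>
    inter_subset_inter_left _ <| closure_mono <| AddSubgroup.closure_mono <|
      inter_subset_inter_right _ <| closedBall_subset_closedBall hrs
  have ht_nonempty (r : Ioi (0 : ℝ)) : (t r).Nonempty := by
    obtain ⟨x, hx, hx1, hx2⟩ :=
      exists_mem_addSubgroupClosure_inter_closedBall_norm_mem_Icc h0 r.2 one_pos
    refine ⟨x, subset_closure hx, mem_closedBall_zero_iff.mpr (by linarith), ?_⟩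
    simpa using hx1
  have : Nonempty (Ioi (0 : ℝ)) := ⟨⟨1, mem_Ioi.mpr one_pos⟩⟩
  obtain ⟨v, hv⟩ := IsCompact.nonempty_iInter_of_directed_nonempty_isCompact_isClosed t
    ht_mono.directed_ge ht_nonempty (fun r => h_annulus.inter_left isClosed_closure)
    (fun r => isClosed_closure.inter h_annulus.isClosed)
  rw [mem_iInter] at hv
  refine ⟨v, ?_, mem_iInter₂.mpr fun r hr => (hv ⟨r, hr⟩).1⟩
  rintro rfl
  exact (hv ⟨1, mem_Ioi.mpr one_pos⟩).2.2 (mem_ball_self one_pos)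

theorem stmt1_general (d : ℕ) (G : AddSubgroup (Euc d))
    (h0 : (0 : Euc d) ∈ closure ((G : Set (Euc d)) \ {0})) :
    ∃ v : Euc d, v ≠ 0 ∧
      v ∈ ⋂ r ∈ Set.Ioi (0 : ℝ),
        closure ((AddSubgroup.closure ((G : Set (Euc d)) ∩ closedBall 0 r) :
          AddSubgroup (Euc d)) : Set (Euc d)) :=
  exists_ne_zero_mem_iInter_closure_addSubgroupClosure_inter_closedBall h0

/-- if `0` is a limit point of `G`, then
`V = ⋂_{r>0} closure(span_ℤ(G ∩ B(0,r)))` contains a nonzero vector,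
i.e. its dimension is more than `0`. -/
theorem stmt1 (d : ℕ) (hd : 0 < d) (G : AddSubgroup (Euc d))
    (h0 : (0 : Euc d) ∈ closure ((G : Set (Euc d)) \ {0})) :
    ∃ v : Euc d, v ≠ 0 ∧
      v ∈ ⋂ r ∈ Set.Ioi (0 : ℝ),
        closure ((AddSubgroup.closure ((G : Set (Euc d)) ∩ closedBall 0 r) :
          AddSubgroup (Euc d)) : Set (Euc d)) :=
  stmt1_general d G h0
end
end

section
/- Let D ⊆ ℝ^d and let a ∈ ℝ^d with a ≠ 0. Suppose the character χ_a is weakly D-equivariant. Then for every r > 0, the set D has (1/‖a‖, r/‖a‖)-stripe structure; moreover the stripe direction can be taken to be a/‖a‖. -/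
open Metric Set
open scoped RealInnerProductSpace

noncomputable section

variable {d : ℕ}

/-!
Weak equivariance with tolerance `r` says exactly that matching `R`-patches at `x` and `y`
force `⟪y - x, a⟫` to lie within `r` of an integer, i.e. `y ∈ S(a, x, 1, r)`. Rescaling the
direction `a` to the unit vector `a / ‖a‖` rescales the period and the width by `1 / ‖a‖`.
-/

lemma exists_abs_add_intCast_lt_of_rhoT_lt {θ θ' ε : ℝ} (h : rhoT θ θ' < ε) :
    ∃ n : ℤ, |θ - θ' + n| < ε := by
  have hne : { r : ℝ | ∃ n : ℤ, r = |θ - θ' + n| }.Nonempty := ⟨_, 0, rfl⟩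
  have hbdd : BddBelow { r : ℝ | ∃ n : ℤ, r = |θ - θ' + n| } :=
    ⟨0, fun _ ⟨_, hn⟩ => hn ▸ abs_nonneg _⟩
  obtain ⟨_, ⟨n, rfl⟩, hlt⟩ := (csInf_lt_iff hbdd hne).mp h
  exact ⟨n, hlt⟩

lemma mem_stripeSet_one_of_abs_add_intCast_le {a x y : Euc d} {r : ℝ} {n : ℤ}
    (h : |⟪x, a⟫ - ⟪y, a⟫ + n| ≤ r) : y ∈ stripeSet a x 1 r := by
  refine ⟨n, ⟪y - x, a⟫ - n, ?_, by ring⟩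
  rw [inner_sub_left, mem_Icc, ← abs_le, ← abs_neg]
  exact (congrArg (|·| ≤ r) (by ring)).mp h

lemma stripeSet_subset_inv_smul {c : ℝ} (hc : 0 < c) (a b : Euc d) (L1 L2 : ℝ) :
    stripeSet a b L1 L2 ⊆ stripeSet (c⁻¹ • a) b (L1 / c) (L2 / c) := by
  rintro y ⟨n, t, ⟨ht₁, ht₂⟩, hy⟩
  refine ⟨n, t / c, ⟨?_, ?_⟩, ?_⟩
  · rw [← neg_div]
    exact div_le_div_of_nonneg_right ht₁ hc.le
  · exact div_le_div_of_nonneg_right ht₂ hc.le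
  · rw [real_inner_smul_right, hy]
    field_simp

lemma StripeStructureWith.inv_smul {D : Set (Euc d)} {a : Euc d} {L1 L2 R c : ℝ}
    (h : StripeStructureWith D a L1 L2 R) (hc : 0 < c) :
    StripeStructureWith D (c⁻¹ • a) (L1 / c) (L2 / c) R :=
  fun x => (h x).trans (stripeSet_subset_inv_smul hc a x L1 L2)

lemma WeaklyEquivariant.exists_stripeStructureWith {D : Set (Euc d)} {a : Euc d}
    (h : WeaklyEquivariant D a) {r : ℝ} (hr : 0 < r) :
    ∃ R > 0, StripeStructureWith D a 1 r R := by
  obtain ⟨R, hR, hpatch⟩ := h r hr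
  refine ⟨R, hR, fun x y hy => ?_⟩
  obtain ⟨n, hn⟩ := exists_abs_add_intCast_lt_of_rhoT_lt (hpatch x y hy)
  exact mem_stripeSet_one_of_abs_add_intCast_le hn.le

/-- if `χ_a` is weakly `D`-equivariant and `a ≠ 0`, then for every `r > 0`
the set `D` has `(1/‖a‖, r/‖a‖)`-stripe structure, and moreover the stripe direction
can be taken to be `a/‖a‖`. -/
theorem stmt2 (d : ℕ) (D : Set (Euc d)) (a : Euc d) (ha : a ≠ 0)
    (hwe : WeaklyEquivariant D a) :
    ∀ r > (0 : ℝ),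
      HasStripeStructure D (1 / ‖a‖) (r / ‖a‖) ∧
      ∃ R > (0 : ℝ), StripeStructureWith D (‖a‖⁻¹ • a) (1 / ‖a‖) (r / ‖a‖) R := by
  intro r hr
  obtain ⟨R, hR, hstripe⟩ := hwe.exists_stripeStructureWith hr
  have hunit := hstripe.inv_smul (norm_pos_iff.mpr ha)
  exact ⟨⟨‖a‖⁻¹ • a, norm_smul_inv_norm ha, R, hR, hunit⟩, R, hR, hunit⟩
end
end

section
/- Let D be a repetitive (R,r)-Delone set in ℝ^d. Take x0 ∈ ℝ^d and R0 > R, and set E = {x ∈ ℝ^d : (D − x0) ∩ B(0,R0) = (D − x) ∩ B(0,R0)}. Then E is a Delone set (in fact E is r-uniformly discrete and relatively dense), and E is locally derivable from D; more precisely, for all x, y ∈ ℝ^d and all L > 0, (D − x) ∩ B(0, R0 + L) = (D − y) ∩ B(0, R0 + L) implies (E − x) ∩ B(0, L) = (E − y) ∩ B(0, L). -/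
open Metric Set
open scoped RealInnerProductSpace

noncomputable section

variable {d : ℕ}

/-! Patch equality is pointwise: `(D - x) ∩ B(c, M) = (D - y) ∩ B(c, M)` iff `w + x ∈ D ↔ w + y ∈ D`
for all `w ∈ B(c, M)`. Fixing a point `p` of `D` within `R0` of `x0` (it exists because `R < R0`),
`x ↦ p - x0 + x` embeds `E` isometrically into `D`, so `E` is `r`-uniformly discrete. Repetitivity
applied to the compact patch `B(x0, R0)` makes `E` relatively dense. Finally, if `D` looks the same
from `x` and `y` up to radius `R0 + L`, then for `‖w‖ ≤ L` it looks the same from `x + w` and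
`y + w` up to radius `R0`, so `x + w ∈ E ↔ y + w ∈ E`. -/

lemma mem_transl {D : Set (Euc d)} {x z : Euc d} : z ∈ transl D x ↔ z + x ∈ D := by
  constructor
  · rintro ⟨y, hy, rfl⟩
    simpa using hy
  · exact fun h => ⟨z + x, h, by simp⟩

lemma transl_zero (D : Set (Euc d)) : transl D 0 = D := by
  ext z
  simp [mem_transl]

lemma transl_inter_closedBall_eq_iff {D : Set (Euc d)} {x y c : Euc d} {M : ℝ} :
    transl D x ∩ closedBall c M = transl D y ∩ closedBall c M ↔
      ∀ w, dist w c ≤ M → (w + x ∈ D ↔ w + y ∈ D) := by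
  simp only [Set.ext_iff, mem_inter_iff, mem_transl, mem_closedBall]
  exact forall_congr' fun w => ⟨fun h hw => by simpa [hw] using h, fun h => by
    by_cases hw : dist w c ≤ M <;> simp [hw, h]⟩

lemma transl_inter_closedBall_eq_iff_recenter {D : Set (Euc d)} {x y c : Euc d} {M : ℝ} :
    transl D x ∩ closedBall c M = transl D y ∩ closedBall c M ↔
      transl D (c + x) ∩ closedBall 0 M = transl D (c + y) ∩ closedBall 0 M := by
  simp only [transl_inter_closedBall_eq_iff]
  refine ⟨fun h w hw => ?_, fun h w hw => ?_⟩
  · simpa only [add_assoc] using h (w + c) (by simpa using hw)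
  · have := h (w - c) (by simpa [dist_eq_norm] using hw)
    rwa [← add_assoc, ← add_assoc, sub_add_cancel] at this

lemma transl_inter_closedBall_add_eq {D : Set (Euc d)} {x y z : Euc d} {M N : ℝ}
    (h : transl D x ∩ closedBall 0 M = transl D y ∩ closedBall 0 M) (hz : ‖z‖ + N ≤ M) :
    transl D (z + x) ∩ closedBall 0 N = transl D (z + y) ∩ closedBall 0 N := by
  rw [transl_inter_closedBall_eq_iff] at h ⊢
  intro w hw
  rw [← add_assoc, ← add_assoc]
  refine h (w + z) ?_
  rw [dist_zero_right] at hw ⊢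
  linarith [norm_add_le w z]

/-- The set `E` of the theorem: the positions at which the `R0`-patch of `D` at `x0` recurs. -/
def patchOccurrences (D : Set (Euc d)) (x0 : Euc d) (R0 : ℝ) : Set (Euc d) :=
  {x | transl D x0 ∩ closedBall 0 R0 = transl D x ∩ closedBall 0 R0}

section patchOccurrences

variable {D : Set (Euc d)} {x0 : Euc d} {R0 : ℝ}

lemma unifDiscrete_patchOccurrences {r : ℝ} (hD : UnifDiscrete D r)
    (hp : ∃ p ∈ D, dist p x0 ≤ R0) : UnifDiscrete (patchOccurrences D x0 R0) r := by
  obtain ⟨p, hpD, hpx0⟩ := hp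
  have hp_mem : ∀ x ∈ patchOccurrences D x0 R0, p - x0 + x ∈ D := by
    intro x hx
    refine (transl_inter_closedBall_eq_iff.mp hx (p - x0) ?_).mp (by simpa using hpD)
    rwa [dist_zero_right, ← dist_eq_norm]
  intro x hx y hy hxy
  simpa using hD _ (hp_mem x hx) _ (hp_mem y hy) (by simpa using hxy)

lemma relDense_patchOccurrences (hrep : Repetitive D) :
    ∃ R' > 0, RelDense (patchOccurrences D x0 R0) R' := by
  obtain ⟨R', hR', hdense⟩ := hrep (closedBall x0 R0) (isCompact_closedBall _ _)
  refine ⟨R', hR', fun z => ?_⟩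
  obtain ⟨t, ht, hzt⟩ := hdense (z - x0)
  refine ⟨x0 + t, ?_, by rwa [dist_eq_norm, sub_sub, ← dist_eq_norm] at hzt⟩
  have ht' : transl D t ∩ closedBall x0 R0 = transl D 0 ∩ closedBall x0 R0 := by
    rwa [transl_zero]
  have := transl_inter_closedBall_eq_iff_recenter.mp ht'
  rw [add_zero] at this
  exact this.symm

lemma transl_patchOccurrences_inter_closedBall_eq {x y : Euc d} {L : ℝ}
    (h : transl D x ∩ closedBall 0 (R0 + L) = transl D y ∩ closedBall 0 (R0 + L)) :
    transl (patchOccurrences D x0 R0) x ∩ closedBall 0 L =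
      transl (patchOccurrences D x0 R0) y ∩ closedBall 0 L := by
  rw [transl_inter_closedBall_eq_iff]
  intro w hw
  rw [dist_zero_right] at hw
  simp only [patchOccurrences, mem_ofPred_eq,
    transl_inter_closedBall_add_eq h (show ‖w‖ + R0 ≤ R0 + L by linarith)]

lemma locDerivable_patchOccurrences (hR0 : 0 ≤ R0) :
    LocDerivable D (patchOccurrences D x0 R0) :=
  ⟨R0, hR0, fun _ _ L _ h =>
    transl_patchOccurrences_inter_closedBall_eq (by rwa [add_comm R0 L])⟩

end patchOccurrences

/-- for a repetitive `(R,r)`-Delone set `D`, `x0 ∈ ℝ^d` and `R0 > R`, the set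
`E = {x : (D-x0) ∩ B(0,R0) = (D-x) ∩ B(0,R0)}` is a Delone set (in fact `r`-uniformly
discrete and relatively dense) and is locally derivable from `D`; more precisely, for all
`x, y` and `L > 0`, `(D-x) ∩ B(0,R0+L) = (D-y) ∩ B(0,R0+L)` implies
`(E-x) ∩ B(0,L) = (E-y) ∩ B(0,L)`. -/
theorem stmt4 (d : ℕ) (D : Set (Euc d)) (R r : ℝ)
    (hDel : IsDeloneWith D R r) (hrep : Repetitive D)
    (x0 : Euc d) (R0 : ℝ) (hR0 : R < R0)
    (E : Set (Euc d))
    (hE : E = { x : Euc d |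
      transl D x0 ∩ closedBall 0 R0 = transl D x ∩ closedBall 0 R0 }) :
    IsDelone E ∧ UnifDiscrete E r ∧ (∃ R' > (0 : ℝ), RelDense E R') ∧
    LocDerivable D E ∧
    ∀ x y : Euc d, ∀ L > (0 : ℝ),
      transl D x ∩ closedBall 0 (R0 + L) = transl D y ∩ closedBall 0 (R0 + L) →
      transl E x ∩ closedBall 0 L = transl E y ∩ closedBall 0 L := by
  obtain ⟨hRpos, hrpos, hdense, hdiscrete⟩ := hDel
  change E = patchOccurrences D x0 R0 at hE
  subst hE
  have hpatch : ∃ p ∈ D, dist p x0 ≤ R0 := by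
    obtain ⟨p, hpD, hp⟩ := hdense x0
    exact ⟨p, hpD, by rw [dist_comm]; linarith⟩
  have hE_discrete := unifDiscrete_patchOccurrences hdiscrete hpatch
  obtain ⟨R', hR', hE_dense⟩ := relDense_patchOccurrences (x0 := x0) (R0 := R0) hrep
  exact ⟨⟨R', r, hR', hrpos, hE_dense, hE_discrete⟩, hE_discrete, ⟨R', hR', hE_dense⟩,
    locDerivable_patchOccurrences (by linarith),
    fun _ _ _ _ => transl_patchOccurrences_inter_closedBall_eq⟩
end
end

section
/- Let D1, D2 ⊆ ℝ^d and let R1, R2 > 0. Suppose D1 is locally derivable from D2 (D2 ⟶ D1). If D1 has (R1,R2)-stripe structure, then D2 has (R1,R2)-stripe structure. -/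
open Metric Set
open scoped RealInnerProductSpace

noncomputable section

variable {d : ℕ}

theorem StripeStructureWith.of_locDerivable {D1 D2 : Set (Euc d)} {a : Euc d}
    {L1 L2 R R0 : ℝ} (hR : 0 ≤ R)
    (hderiv : ∀ x y : Euc d, ∀ L ≥ (0 : ℝ),
      transl D2 x ∩ closedBall 0 (L + R0) = transl D2 y ∩ closedBall 0 (L + R0) →
      transl D1 x ∩ closedBall 0 L = transl D1 y ∩ closedBall 0 L)
    (hD1 : StripeStructureWith D1 a L1 L2 R) :
    StripeStructureWith D2 a L1 L2 (R + R0) :=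
  fun x _ hy => hD1 x (hderiv x _ R hR hy)

theorem LocDerivable.hasStripeStructure {D1 D2 : Set (Euc d)} {L1 L2 : ℝ}
    (hLD : LocDerivable D2 D1) (hD1 : HasStripeStructure D1 L1 L2) :
    HasStripeStructure D2 L1 L2 := by
  obtain ⟨R0, hR0, hderiv⟩ := hLD
  obtain ⟨a, ha, R, hR, hstripe⟩ := hD1
  exact ⟨a, ha, R + R0, add_pos_of_pos_of_nonneg hR hR0, hstripe.of_locDerivable hR.le hderiv⟩

theorem stmt14_general (d : ℕ) (D1 D2 : Set (Euc d)) (R1 R2 : ℝ)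
    (hLD : LocDerivable D2 D1) (hstr : HasStripeStructure D1 R1 R2) :
    HasStripeStructure D2 R1 R2 :=
  hLD.hasStripeStructure hstr

/-- if `D1` is locally derivable from `D2` and `D1` has `(R1,R2)`-stripe
structure, then `D2` has `(R1,R2)`-stripe structure. -/
theorem stmt14 (d : ℕ) (D1 D2 : Set (Euc d)) (R1 R2 : ℝ) (hR1 : 0 < R1) (hR2 : 0 < R2)
    (hLD : LocDerivable D2 D1) (hstr : HasStripeStructure D1 R1 R2) :
    HasStripeStructure D2 R1 R2 :=
  stmt14_general d D1 D2 R1 R2 hLD hstr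
end
end

section
/- Let D1, D2 ⊆ ℝ^d. The following two conditions are equivalent: (1) there exist x0 ∈ ℝ^d, y0 ∈ ℝ^d and R0 ≥ 0 such that for all x, y ∈ ℝ^d and all R ≥ 0, (D1 − x) ∩ B(x0, R + R0) = (D1 − y) ∩ B(x0, R + R0) implies (D2 − x) ∩ B(y0, R) = (D2 − y) ∩ B(y0, R); (2) for all x1 ∈ ℝ^d and y1 ∈ ℝ^d there exists R1 ≥ 0 such that for all x, y ∈ ℝ^d and all R ≥ 0, (D1 − x) ∩ B(x1, R + R1) = (D1 − y) ∩ B(x1, R + R1) implies (D2 − x) ∩ B(y1, R) = (D2 − y) ∩ B(y1, R). -/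
open Metric Set
open scoped RealInnerProductSpace

noncomputable section

variable {d : ℕ}

/-- The `D1`-patch is read around `x0`, the `D2`-patch it determines lies around `y0`. -/
def LocDerivableAround (D1 D2 : Set (Euc d)) (x0 y0 : Euc d) (R0 : ℝ) : Prop :=
  ∀ x y : Euc d, ∀ R ≥ (0 : ℝ),
    transl D1 x ∩ closedBall x0 (R + R0) = transl D1 y ∩ closedBall x0 (R + R0) →
    transl D2 x ∩ closedBall y0 R = transl D2 y ∩ closedBall y0 R

theorem inter_eq_inter_of_subset {α : Type*} {A B S T : Set α} (h : A ∩ S = B ∩ S)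
    (hT : T ⊆ S) : A ∩ T = B ∩ T := by
  rw [← inter_eq_self_of_subset_right hT, ← inter_assoc, h, inter_assoc]

/-- Enlarge the `D2`-ball around `y1` to one around `y0`, and fit the matching `D1`-ball around
`x0` inside one around `x1`. -/
theorem LocDerivableAround.recenter {D1 D2 : Set (Euc d)} {x0 y0 : Euc d} {R0 : ℝ}
    (H : LocDerivableAround D1 D2 x0 y0 R0) (x1 y1 : Euc d) :
    LocDerivableAround D1 D2 x1 y1 (R0 + dist x0 x1 + dist y0 y1) := by
  intro x y R hR h1
  have h0 := inter_eq_inter_of_subset h1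
    (closedBall_subset_closedBall' (ε₁ := R + dist y0 y1 + R0) (by linarith))
  refine inter_eq_inter_of_subset (H x y _ (by positivity) h0)
    (closedBall_subset_closedBall' ?_)
  rw [dist_comm]

/-- equivalence of the two defining conditions of local derivability for
subsets of `ℝ^d`. -/
theorem stmt15 (d : ℕ) (D1 D2 : Set (Euc d)) :
    (∃ x0 y0 : Euc d, ∃ R0 ≥ (0 : ℝ), ∀ x y : Euc d, ∀ R ≥ (0 : ℝ),
      transl D1 x ∩ closedBall x0 (R + R0) = transl D1 y ∩ closedBall x0 (R + R0) →
      transl D2 x ∩ closedBall y0 R = transl D2 y ∩ closedBall y0 R) ↔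
    (∀ x1 y1 : Euc d, ∃ R1 ≥ (0 : ℝ), ∀ x y : Euc d, ∀ R ≥ (0 : ℝ),
      transl D1 x ∩ closedBall x1 (R + R1) = transl D1 y ∩ closedBall x1 (R + R1) →
      transl D2 x ∩ closedBall y1 R = transl D2 y ∩ closedBall y1 R) := by
  constructor
  · rintro ⟨x0, y0, R0, hR0, H⟩ x1 y1
    exact ⟨R0 + dist x0 x1 + dist y0 y1, by positivity, LocDerivableAround.recenter H x1 y1⟩
  · exact fun H => ⟨0, 0, H 0 0⟩
end
end
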